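/- arXiv:1706.07353 — 3 statements merged into one kernel-verified Lean document; each statement's English description precedes it below -/
import Mathlib

section
/- Let d ≥ 1 and let a : Fin d → ℚ be a nonincreasing nonnegative sequence with weight |a| > 0. Then a nonincreasing nonnegative sequence b : Fin d → ℚ belongs to the cone C(a) (i.e. |a|·(b 0 + … + b n) ≤ |b|·(a 0 + … + a n) for every n < d) if and only if there exist nonnegative rational coefficients τ_L, indexed by the compositions L of d, such that b = Σ_L τ_L · v(L,a). In other words, C(a) is the rational cone generated by the finite set { v(L,a) : L a composition of d }. -/
open Finset

/-- `vSeq L a` is the sequence `v(L,a)` of length `d`: it is constant on each block of the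
composition `L` of `d`, and its value on block `i` is the average of `a` over that block,
i.e. (sum of `a` over block `i`) divided by the length `lᵢ` of block `i`. -/
noncomputable def vSeq {d : ℕ} (L : Composition d) (a : Fin d → ℚ) : Fin d → ℚ :=
  fun i => (∑ j : Fin d, if L.index j = L.index i then a j else 0) / (L.blocksFun (L.index i) : ℚ)

/-!
The constraints of `C(a)` (monotonicity, nonnegativity and the prefix inequalities) are linear,
so `C(a)` is a pointed polyhedral cone, and it contains every `v(L,a)`: averaging an antitone
sequence over blocks keeps its total and lowers its prefix sums.

Conversely, for `b ≠ 0` in `C(a)` let `L` be the composition of `d` into the level sets of `b`.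
Then every constraint tight at `b` is tight at `v(L,a)`. For a prefix inequality this is because
the slack sequence `|b|·a - |a|·b` is antitone on each block of `L` while its prefix sums are
nonnegative, so a zero prefix sum inside a block forces equality of the block averages.
Subtracting from `b` the largest multiple of `v(L,a)` that stays in the cone makes one more
constraint tight, and induction on the number of non-tight constraints decomposes `b`.
-/

section PolyhedralCone

variable {K V ι Γ : Type*} [Field K] [LinearOrder K] [IsStrictOrderedRing K]
  [AddCommGroup V] [Module K V] [Fintype ι] (ℓ : ι → Module.Dual K V)

theorem exists_sub_smul_nonneg_of_face {x w : V} (hx : ∀ k, 0 ≤ ℓ k x) (hw : ∀ k, 0 ≤ ℓ k w)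
    (hw_pos : ∃ k, 0 < ℓ k w) (hface : ∀ k, ℓ k x = 0 → ℓ k w = 0) :
    ∃ t : K, 0 ≤ t ∧ (∀ k, 0 ≤ ℓ k (x - t • w)) ∧
      (univ.filter fun k => ℓ k (x - t • w) ≠ 0) ⊂ univ.filter fun k => ℓ k x ≠ 0 := by
  -- ratio test: `t` is the largest step keeping every constraint nonnegative
  obtain ⟨k₀, hk₀, hmin⟩ := exists_min_image ({k | 0 < ℓ k w} : Finset ι)
    (fun k => ℓ k x / ℓ k w) (by simpa [Finset.Nonempty] using hw_pos)
  rw [mem_filter_univ] at hk₀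
  have hk₀x : ℓ k₀ x ≠ 0 := fun h => hk₀.ne' (hface k₀ h)
  refine ⟨ℓ k₀ x / ℓ k₀ w, div_nonneg (hx k₀) hk₀.le, fun k => ?_, ?_⟩
  · rw [map_sub, map_smul, smul_eq_mul, sub_nonneg]
    rcases (hw k).eq_or_lt with hk | hk
    · rw [← hk, mul_zero]; exact hx k
    · exact (le_div_iff₀ hk).1 (hmin k ((mem_filter_univ _).2 hk))
  · refine ssubset_of_subset_of_ne (fun k => ?_) fun h => ?_
    · simp only [mem_filter_univ, map_sub, map_smul, smul_eq_mul]
      intro hk hx0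
      exact hk (by rw [hx0, hface k hx0]; simp)
    · have : k₀ ∈ ({k | ℓ k x ≠ 0} : Finset ι) := (mem_filter_univ _).2 hk₀x
      rw [← h, mem_filter_univ, map_sub, map_smul, smul_eq_mul, div_mul_cancel₀ _ hk₀.ne',
        sub_self] at this
      exact this rfl

theorem exists_nonneg_sum_smul_of_face [Fintype Γ] (G : Γ → V)
    (hpointed : ∀ x, (∀ k, ℓ k x = 0) → x = 0)
    (hG : ∀ x, (∀ k, 0 ≤ ℓ k x) → x ≠ 0 →
      ∃ γ, (∀ k, 0 ≤ ℓ k (G γ)) ∧ G γ ≠ 0 ∧ ∀ k, ℓ k x = 0 → ℓ k (G γ) = 0)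
    (x : V) (hx : ∀ k, 0 ≤ ℓ k x) :
    ∃ τ : Γ → K, (∀ γ, 0 ≤ τ γ) ∧ x = ∑ γ, τ γ • G γ := by
  classical
  induction hN : #{k | ℓ k x ≠ 0} using Nat.strong_induction_on generalizing x with
  | _ N ih =>
  by_cases hx0 : x = 0
  · exact ⟨0, fun _ => le_rfl, by simp [hx0]⟩
  obtain ⟨γ, hγ, hγ0, hface⟩ := hG x hx hx0
  have hγ_pos : ∃ k, 0 < ℓ k (G γ) := by
    by_contra! h
    exact hγ0 (hpointed _ fun k => le_antisymm (h k) (hγ k))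
  obtain ⟨t, ht, hc, hlt⟩ := exists_sub_smul_nonneg_of_face ℓ hx hγ hγ_pos hface
  obtain ⟨τ, hτ, hτc⟩ := ih _ (hN ▸ card_lt_card hlt) (x - t • G γ) hc rfl
  refine ⟨τ + Pi.single γ t, fun γ' => add_nonneg (hτ γ') ?_, ?_⟩
  · rcases eq_or_ne γ' γ with rfl | h
    · simpa using ht
    · simp [h]
  · simp only [Pi.add_apply, add_smul, sum_add_distrib, Pi.single_apply, ite_smul, zero_smul,
      sum_ite_eq', mem_univ, if_true, ← hτc]
    abel

end PolyhedralCone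

theorem Finset.card_nsmul_sum_le_card_nsmul_sum {α M : Type*} [AddCommMonoid M] [PartialOrder M]
    [IsOrderedAddMonoid M] {s t : Finset α} {f : α → M} (h : ∀ i ∈ s, ∀ j ∈ t, f j ≤ f i) :
    #s • ∑ j ∈ t, f j ≤ #t • ∑ i ∈ s, f i := by
  calc #s • ∑ j ∈ t, f j = ∑ _i ∈ s, ∑ j ∈ t, f j := (sum_const _).symm
    _ ≤ ∑ i ∈ s, ∑ _j ∈ t, f i := sum_le_sum fun i hi => sum_le_sum fun j hj => h i hi j hj
    _ = ∑ _j ∈ t, ∑ i ∈ s, f i := sum_comm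
    _ = #t • ∑ i ∈ s, f i := sum_const _

theorem Finset.eq_Iic_max'_of_isLowerSet {α : Type*} [LinearOrder α] [LocallyFiniteOrderBot α]
    {s : Finset α} (hs : IsLowerSet (s : Set α)) (hne : s.Nonempty) : s = Iic (s.max' hne) := by
  ext j
  exact ⟨fun hj => mem_Iic.2 (le_max' s j hj), fun hj => hs (mem_Iic.1 hj) (max'_mem s hne)⟩

theorem Finset.sum_nonneg_of_isLowerSet {α M : Type*} [LinearOrder α] [LocallyFiniteOrderBot α]
    [AddCommMonoid M] [PartialOrder M] {f : α → M} (hf : ∀ m, 0 ≤ ∑ i ∈ Iic m, f i)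
    {s : Finset α} (hs : IsLowerSet (s : Set α)) : 0 ≤ ∑ i ∈ s, f i := by
  rcases s.eq_empty_or_nonempty with rfl | hne
  · exact (sum_empty).ge
  · rw [eq_Iic_max'_of_isLowerSet hs hne]; exact hf _

namespace Composition

variable {n : ℕ} (c : Composition n)

theorem index_mono : Monotone c.index := by
  intro i j hij
  by_contra! h
  have := c.monotone_sizeUpTo (Nat.succ_le_of_lt (Fin.lt_def.1 h))
  have := c.lt_sizeUpTo_index_succ j
  have := c.sizeUpTo_index_le i
  simp only [Fin.le_def, Fin.val_succ, Nat.succ_eq_add_one] at *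
  omega

theorem mem_boundaries_iff {m : Fin (n + 1)} :
    m ∈ c.boundaries ↔ ∃ k : Fin (c.length + 1), c.sizeUpTo k = m := by
  simp [boundaries, boundary, Fin.ext_iff]

theorem index_eq_index_iff {i j : Fin n} (hij : i ≤ j) :
    c.index i = c.index j ↔ ∀ m ∈ c.boundaries, ¬ ((i : ℕ) < m ∧ (m : ℕ) ≤ j) := by
  simp only [mem_boundaries_iff, forall_exists_index]
  constructor
  · rintro h m k hk ⟨hik, hkj⟩
    rw [← hk] at hik hkj
    have h1 := c.sizeUpTo_index_le i
    have h2 := c.lt_sizeUpTo_index_succ j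
    rw [← h] at h2
    have hk : (c.index i : ℕ) < k := by
      by_contra! hk; have := c.monotone_sizeUpTo hk; omega
    have := c.monotone_sizeUpTo (Nat.succ_le_of_lt hk)
    simp only [Fin.val_succ, Nat.succ_eq_add_one] at *
    omega
  · intro h
    by_contra hne
    have hlt : c.index i < c.index j := lt_of_le_of_ne (c.index_mono hij) hne
    refine h ⟨_, Nat.lt_succ_of_le (c.sizeUpTo_le (c.index j))⟩ (Fin.castSucc (c.index j)) rfl
      ⟨?_, c.sizeUpTo_index_le j⟩
    have := c.lt_sizeUpTo_index_succ i
    have := c.monotone_sizeUpTo (Nat.succ_le_of_lt (Fin.lt_def.1 hlt))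
    simp only [Fin.val_succ, Nat.succ_eq_add_one] at *
    omega

def block (k : Fin c.length) : Finset (Fin n) := univ.filter (c.index · = k)

theorem card_block (k : Fin c.length) : #(c.block k) = c.blocksFun k := by
  have : c.block k = univ.map (c.embedding k).toEmbedding := by
    ext j
    simp only [block, mem_filter_univ, mem_map, mem_univ, true_and, RelEmbedding.coe_toEmbedding]
    rw [eq_comm, ← mem_range_embedding_iff']; rfl
  simp [this]

theorem card_block_pos (k : Fin c.length) : 0 < #(c.block k) :=
  c.card_block k ▸ c.one_le_blocksFun k

def earlierBlocks (i : Fin n) : Finset (Fin n) := univ.filter (c.index · < c.index i)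

def blockIic (i : Fin n) : Finset (Fin n) := (c.block (c.index i)).filter (· ≤ i)

def blockIoi (i : Fin n) : Finset (Fin n) := (c.block (c.index i)).filter (i < ·)

theorem mem_block {k : Fin c.length} {j : Fin n} : j ∈ c.block k ↔ c.index j = k := by
  simp [block]

theorem mem_blockIic {i j : Fin n} : j ∈ c.blockIic i ↔ c.index j = c.index i ∧ j ≤ i := by
  simp [blockIic, block]

theorem mem_blockIoi {i j : Fin n} : j ∈ c.blockIoi i ↔ c.index j = c.index i ∧ i < j := by
  simp [blockIoi, block]

theorem isLowerSet_earlierBlocks (i : Fin n) : IsLowerSet (c.earlierBlocks i : Set (Fin n)) :=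
  fun _ _ hle h => by
    simp only [earlierBlocks, coe_filter, mem_univ, true_and, Set.mem_ofPred_eq] at h ⊢
    exact (c.index_mono hle).trans_lt h

theorem isLowerSet_earlierBlocks_union_block (i : Fin n) :
    IsLowerSet ((c.earlierBlocks i ∪ c.block (c.index i) : Finset (Fin n)) : Set (Fin n)) :=
  fun _ _ hle h => by
    simp only [earlierBlocks, block, coe_union, coe_filter, mem_univ, true_and,
      Set.mem_union, Set.mem_ofPred_eq, ← le_iff_lt_or_eq] at h ⊢
    exact (c.index_mono hle).trans h

theorem disjoint_earlierBlocks_block (i : Fin n) :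
    Disjoint (c.earlierBlocks i) (c.block (c.index i)) := by
  simp only [disjoint_left, earlierBlocks, block, mem_filter_univ]
  exact fun _ h => h.ne

theorem sum_Iic_eq_add {M : Type*} [AddCommMonoid M] (f : Fin n → M) (i : Fin n) :
    ∑ j ∈ Iic i, f j = ∑ j ∈ c.earlierBlocks i, f j + ∑ j ∈ c.blockIic i, f j := by
  rw [← sum_union]
  · congr 1
    ext j
    simp only [mem_Iic, mem_union, earlierBlocks, blockIic, block, mem_filter, mem_univ, true_and]
    constructor
    · intro hj
      rcases (c.index_mono hj).lt_or_eq with h | h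
      · exact Or.inl h
      · exact Or.inr ⟨h, hj⟩
    · rintro (h | h)
      · by_contra! hij
        exact (c.index_mono hij.le).not_gt h
      · exact h.2
  · exact (c.disjoint_earlierBlocks_block i).mono_right (filter_subset _ _)

theorem sum_block_index_eq_add {M : Type*} [AddCommMonoid M] (f : Fin n → M) (i : Fin n) :
    ∑ j ∈ c.block (c.index i), f j = ∑ j ∈ c.blockIic i, f j + ∑ j ∈ c.blockIoi i, f j := by
  simp only [blockIic, blockIoi, ← not_le]
  exact (sum_filter_add_sum_filter_not _ _ _).symm

theorem card_block_index_eq_add (i : Fin n) :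
    #(c.block (c.index i)) = #(c.blockIic i) + #(c.blockIoi i) := by
  simp only [blockIic, blockIoi, ← not_le]
  exact (card_filter_add_card_filter_not _).symm

theorem sum_filter_index_eq_sum_block {M : Type*} [AddCommMonoid M] (f : Fin n → M)
    (q : Fin c.length → Prop) [DecidablePred q] :
    ∑ j with q (c.index j), f j = ∑ k with q k, ∑ j ∈ c.block k, f j := by
  rw [← sum_fiberwise_of_maps_to (g := c.index) (t := univ.filter q) (by simp)]
  refine sum_congr rfl fun k hk => sum_congr ?_ fun _ _ => rfl
  ext j
  simp only [mem_filter, mem_univ, true_and, mem_block] at hk ⊢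
  exact ⟨fun h => h.2, fun h => ⟨h ▸ hk, h⟩⟩

section LevelSets

variable {α : Type*} [LinearOrder α]

def ofLevelSets (b : Fin n → α) : Composition n :=
  CompositionAsSet.toComposition
    { boundaries := univ.filter fun m => ∀ i j : Fin n, (i : ℕ) < m → (m : ℕ) ≤ j → b j ≠ b i
      zero_mem := by simp
      getLast_mem := by simp [Fin.is_lt, not_le_of_gt] }

theorem index_ofLevelSets_eq_index_iff {b : Fin n → α} (hb : Antitone b) (i j : Fin n) :
    (ofLevelSets b).index i = (ofLevelSets b).index j ↔ b i = b j := by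
  wlog hij : i ≤ j
  · rw [eq_comm, this hb j i (le_of_not_ge hij), eq_comm]
  rw [index_eq_index_iff _ hij, ofLevelSets, CompositionAsSet.toComposition_boundaries]
  simp only [mem_filter_univ, not_and, not_le]
  constructor
  · intro h
    by_contra hne
    obtain ⟨m, hm, hmin⟩ := exists_min_image (univ.filter (b · = b j)) id ⟨j, by simp⟩
    rw [mem_filter_univ] at hm
    have hmj : m ≤ j := hmin j (by simp)
    have him : i < m := by
      by_contra! hmi
      exact hne (le_antisymm (hm ▸ hb hmi) (hb hij))
    refine absurd hmj (not_le.2 (h (Fin.castSucc m) (fun i' j' hi' hj' heq => ?_) him))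
    have hi' : b j < b i' := by
      refine lt_of_le_of_ne (hm ▸ hb (le_of_lt hi')) fun h' => ?_
      exact absurd (hmin i' (by simp [h'])) (not_le.2 hi')
    exact (hb (show m ≤ j' from hj')).trans_lt (hm ▸ hi') |>.ne heq
  · intro h m hm him
    by_contra! hmj
    exact hm i j him hmj h.symm

end LevelSets

end Composition

section vSeq

variable {d : ℕ} (L : Composition d)

theorem vSeq_apply (f : Fin d → ℚ) (i : Fin d) :
    vSeq L f i = (∑ j ∈ L.block (L.index i), f j) / #(L.block (L.index i)) := by
  rw [vSeq, L.card_block, Composition.block, sum_filter]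

theorem vSeq_eq_of_index_eq (f : Fin d → ℚ) {i j : Fin d} (h : L.index i = L.index j) :
    vSeq L f i = vSeq L f j := by
  simp only [vSeq_apply, h]

theorem sum_block_vSeq (f : Fin d → ℚ) (k : Fin L.length) :
    ∑ j ∈ L.block k, vSeq L f j = ∑ j ∈ L.block k, f j := by
  have hk : (#(L.block k) : ℚ) ≠ 0 := by exact_mod_cast (L.card_block_pos k).ne'
  rw [sum_congr rfl fun j hj => by rw [vSeq_apply, L.mem_block.1 hj], sum_const, nsmul_eq_mul,
    mul_div_cancel₀ _ hk]

theorem sum_filter_index_vSeq (f : Fin d → ℚ) (q : Fin L.length → Prop) [DecidablePred q] :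
    ∑ j with q (L.index j), vSeq L f j = ∑ j with q (L.index j), f j := by
  rw [L.sum_filter_index_eq_sum_block, L.sum_filter_index_eq_sum_block]
  exact sum_congr rfl fun k _ => sum_block_vSeq L f k

theorem sum_vSeq (f : Fin d → ℚ) : ∑ i, vSeq L f i = ∑ i, f i := by
  simpa only [filter_true] using sum_filter_index_vSeq L f (fun _ => True)

theorem vSeq_nonneg {f : Fin d → ℚ} (hf : ∀ i, 0 ≤ f i) (i : Fin d) : 0 ≤ vSeq L f i := by
  rw [vSeq_apply]; exact div_nonneg (sum_nonneg fun j _ => hf j) (Nat.cast_nonneg _)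

theorem vSeq_antitone {f : Fin d → ℚ} (hf : Antitone f) : Antitone (vSeq L f) := by
  intro i j hij
  rcases (L.index_mono hij).lt_or_eq with hlt | heq
  · have hsep : ∀ x ∈ L.block (L.index i), ∀ y ∈ L.block (L.index j), f y ≤ f x := by
      intro x hx y hy
      rw [L.mem_block] at hx hy
      exact hf (le_of_lt (L.index_mono.reflect_lt (hx ▸ hy ▸ hlt)))
    have := card_nsmul_sum_le_card_nsmul_sum hsep
    simp only [nsmul_eq_mul] at this
    rw [vSeq_apply, vSeq_apply, div_le_div_iff₀ (by exact_mod_cast L.card_block_pos _)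
      (by exact_mod_cast L.card_block_pos _)]
    linarith
  · exact (vSeq_eq_of_index_eq L f heq).ge

theorem vSeq_sub (s t : ℚ) (f g : Fin d → ℚ) :
    vSeq L (s • f - t • g) = s • vSeq L f - t • vSeq L g := by
  funext i
  simp only [vSeq_apply, Pi.sub_apply, Pi.smul_apply, smul_eq_mul, sum_sub_distrib, ← mul_sum]
  ring

theorem vSeq_eq_self {g : Fin d → ℚ} (hg : ∀ i j, L.index i = L.index j → g i = g j) :
    vSeq L g = g := by
  funext i
  have hk : (#(L.block (L.index i)) : ℚ) ≠ 0 := by exact_mod_cast (L.card_block_pos _).ne'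
  rw [vSeq_apply, sum_congr rfl fun j hj => hg j i (L.mem_block.1 hj), sum_const, nsmul_eq_mul,
    mul_div_cancel_left₀ _ hk]

theorem sum_Iic_sub_sum_Iic_vSeq (f : Fin d → ℚ) (n : Fin d) :
    ∑ j ∈ Iic n, f j - ∑ j ∈ Iic n, vSeq L f j =
      (#(L.blockIoi n) * ∑ j ∈ L.blockIic n, f j - #(L.blockIic n) * ∑ j ∈ L.blockIoi n, f j) /
        #(L.block (L.index n)) := by
  have hbefore : ∑ j ∈ L.earlierBlocks n, vSeq L f j = ∑ j ∈ L.earlierBlocks n, f j :=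
    sum_filter_index_vSeq L f (· < L.index n)
  have htop : ∑ j ∈ L.blockIic n, vSeq L f j = #(L.blockIic n) * vSeq L f n := by
    have : ∀ j ∈ L.blockIic n, vSeq L f j = vSeq L f n := fun j hj =>
      vSeq_eq_of_index_eq L f (L.mem_blockIic.1 hj).1
    rw [sum_congr rfl this, sum_const, nsmul_eq_mul]
  have hcard : (#(L.block (L.index n)) : ℚ) ≠ 0 := by exact_mod_cast (L.card_block_pos _).ne'
  rw [L.sum_Iic_eq_add, L.sum_Iic_eq_add, hbefore, htop, vSeq_apply, L.sum_block_index_eq_add]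
  rw [L.card_block_index_eq_add, Nat.cast_add] at hcard ⊢
  field_simp
  ring

variable {L} in
theorem sum_blockIoi_le {f : Fin d → ℚ} (hf : ∀ i j, L.index i = L.index j → i ≤ j → f j ≤ f i)
    (n : Fin d) :
    #(L.blockIic n) * ∑ j ∈ L.blockIoi n, f j ≤ #(L.blockIoi n) * ∑ j ∈ L.blockIic n, f j := by
  have hsep : ∀ x ∈ L.blockIic n, ∀ y ∈ L.blockIoi n, f y ≤ f x := by
    intro x hx y hy
    rw [L.mem_blockIic] at hx
    rw [L.mem_blockIoi] at hy
    exact hf x y (hx.1.trans hy.1.symm) (hx.2.trans hy.2.le)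
  simpa only [nsmul_eq_mul] using card_nsmul_sum_le_card_nsmul_sum hsep

theorem sum_Iic_vSeq_le {f : Fin d → ℚ}
    (hf : ∀ i j, L.index i = L.index j → i ≤ j → f j ≤ f i) (n : Fin d) :
    ∑ j ∈ Iic n, vSeq L f j ≤ ∑ j ∈ Iic n, f j := by
  have := sum_Iic_sub_sum_Iic_vSeq L f n
  have : 0 ≤ ∑ j ∈ Iic n, f j - ∑ j ∈ Iic n, vSeq L f j := by
    rw [this]; exact div_nonneg (sub_nonneg.2 (sum_blockIoi_le hf n)) (Nat.cast_nonneg _)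
  linarith

theorem sum_Iic_vSeq_eq_zero {f : Fin d → ℚ}
    (hf : ∀ i j, L.index i = L.index j → i ≤ j → f j ≤ f i)
    (hprefix : ∀ m, 0 ≤ ∑ j ∈ Iic m, f j) {n : Fin d} (hn : ∑ j ∈ Iic n, f j = 0) :
    ∑ j ∈ Iic n, vSeq L f j = 0 := by
  have hbefore := sum_nonneg_of_isLowerSet hprefix (L.isLowerSet_earlierBlocks n)
  have hupto := sum_nonneg_of_isLowerSet hprefix (L.isLowerSet_earlierBlocks_union_block n)
  rw [sum_union (L.disjoint_earlierBlocks_block n), L.sum_block_index_eq_add] at hupto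
  rw [L.sum_Iic_eq_add] at hn
  have hIic : ∑ j ∈ L.blockIic n, f j ≤ 0 := by linarith
  have hIoi : 0 ≤ ∑ j ∈ L.blockIoi n, f j := by linarith
  -- the head of `n`'s block has sum `≤ 0`, its tail has sum `≥ 0`, and `f` is larger on the head
  have hnum : (#(L.blockIoi n) * ∑ j ∈ L.blockIic n, f j - #(L.blockIic n) * ∑ j ∈ L.blockIoi n, f j
      : ℚ) = 0 := by
    have := mul_nonpos_of_nonneg_of_nonpos (Nat.cast_nonneg (α := ℚ) #(L.blockIoi n)) hIic
    have := mul_nonneg (Nat.cast_nonneg (α := ℚ) #(L.blockIic n)) hIoi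
    linarith [sum_blockIoi_le hf n]
  have hdefect := sum_Iic_sub_sum_Iic_vSeq L f n
  rw [hnum, zero_div, L.sum_Iic_eq_add] at hdefect
  linarith

end vSeq

section Cone

variable {d : ℕ}

def slack (a b : Fin d → ℚ) : Fin d → ℚ := (∑ i, b i) • a - (∑ i, a i) • b

theorem sum_slack (a b : Fin d → ℚ) (s : Finset (Fin d)) :
    ∑ j ∈ s, slack a b j = (∑ i, b i) * ∑ j ∈ s, a j - (∑ i, a i) * ∑ j ∈ s, b j := by
  simp only [slack, Pi.sub_apply, Pi.smul_apply, smul_eq_mul, sum_sub_distrib, ← mul_sum]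

variable (a : Fin d → ℚ)

/-- The constraints `x j ≤ x i` for `i ≤ j`, `0 ≤ x i`, and the prefix inequalities of `C(a)`. -/
def coneConstraint :
    ({p : Fin d × Fin d // p.1 ≤ p.2} ⊕ Fin d) ⊕ Fin d → Module.Dual ℚ (Fin d → ℚ) :=
  let x (i : Fin d) : Module.Dual ℚ (Fin d → ℚ) := LinearMap.proj i
  Sum.elim (Sum.elim (fun p => x p.1.1 - x p.1.2) x)
    fun n => (∑ i ∈ Iic n, a i) • (∑ i, x i) - (∑ i, a i) • ∑ i ∈ Iic n, x i

@[simp]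
theorem coneConstraint_pair (p : {p : Fin d × Fin d // p.1 ≤ p.2}) (x : Fin d → ℚ) :
    coneConstraint a (.inl (.inl p)) x = x p.1.1 - x p.1.2 := rfl

@[simp]
theorem coneConstraint_coord (i : Fin d) (x : Fin d → ℚ) :
    coneConstraint a (.inl (.inr i)) x = x i := rfl

@[simp]
theorem coneConstraint_prefix (n : Fin d) (x : Fin d → ℚ) :
    coneConstraint a (.inr n) x = ∑ j ∈ Iic n, slack a x j := by
  simp [coneConstraint, sum_slack, mul_comm]

theorem coneConstraint_nonneg_iff (x : Fin d → ℚ) :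
    (∀ k, 0 ≤ coneConstraint a k x) ↔ Antitone x ∧ (∀ i, 0 ≤ x i) ∧
      ∀ n, (∑ i, a i) * ∑ i ∈ Iic n, x i ≤ (∑ i, x i) * ∑ i ∈ Iic n, a i := by
  simp only [Sum.forall, Subtype.forall, Prod.forall, coneConstraint_pair, coneConstraint_coord,
    coneConstraint_prefix, sum_slack, sub_nonneg]
  exact ⟨fun ⟨⟨h₁, h₂⟩, h₃⟩ => ⟨fun i j hij => h₁ i j hij, h₂, h₃⟩,
    fun ⟨h₁, h₂, h₃⟩ => ⟨⟨fun i j hij => h₁ hij, h₂⟩, h₃⟩⟩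

variable {a}

theorem vSeq_mem_cone (L : Composition d) (ha_mono : Antitone a) (ha_nonneg : ∀ i, 0 ≤ a i)
    (k) : 0 ≤ coneConstraint a k (vSeq L a) := by
  refine (coneConstraint_nonneg_iff a _).2 ⟨vSeq_antitone L ha_mono, vSeq_nonneg L ha_nonneg,
    fun n => ?_⟩ k
  rw [sum_vSeq]
  exact mul_le_mul_of_nonneg_left (sum_Iic_vSeq_le L (fun _ _ _ h => ha_mono h) n)
    (sum_nonneg fun i _ => ha_nonneg i)

variable {b : Fin d → ℚ}

theorem sum_Iic_vSeq_ofLevelSets (ha : Antitone a) (hb : Antitone b) (hB : 0 < ∑ i, b i)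
    (hslack : ∀ m, 0 ≤ ∑ j ∈ Iic m, slack a b j) {n : Fin d}
    (hn : ∑ j ∈ Iic n, slack a b j = 0) :
    ∑ i ∈ Iic n, vSeq (Composition.ofLevelSets b) a i = ∑ i ∈ Iic n, a i := by
  set L := Composition.ofLevelSets b
  have hL := Composition.index_ofLevelSets_eq_index_iff hb
  have hf : ∀ i j, L.index i = L.index j → i ≤ j → slack a b j ≤ slack a b i := by
    intro i j hij hle
    simp only [slack, Pi.sub_apply, Pi.smul_apply, smul_eq_mul, (hL i j).1 hij]
    linarith [mul_le_mul_of_nonneg_left (ha hle) hB.le]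
  have key := sum_Iic_vSeq_eq_zero L hf hslack hn
  rw [slack, vSeq_sub, vSeq_eq_self L fun i j h => (hL i j).1 h] at key
  rw [sum_slack] at hn
  simp only [Pi.sub_apply, Pi.smul_apply, smul_eq_mul, sum_sub_distrib, ← mul_sum] at key
  have : (∑ i, b i) * (∑ i ∈ Iic n, vSeq L a i - ∑ i ∈ Iic n, a i) = 0 := by linarith
  exact sub_eq_zero.1 ((mul_eq_zero.1 this).resolve_left hB.ne')

theorem vSeq_ofLevelSets_eq_zero (ha : ∀ i, 0 ≤ a i) (hb : Antitone b) (hb_nonneg : ∀ i, 0 ≤ b i)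
    (hB : 0 < ∑ i, b i) (hslack : ∀ m, 0 ≤ ∑ j ∈ Iic m, slack a b j) {i : Fin d}
    (hi : b i = 0) : vSeq (Composition.ofLevelSets b) a i = 0 := by
  set L := Composition.ofLevelSets b
  have hL := Composition.index_ofLevelSets_eq_index_iff hb
  have huniv : univ = L.earlierBlocks i ∪ L.block (L.index i) := by
    ext j
    simp only [mem_univ, mem_union, Composition.earlierBlocks, mem_filter_univ, L.mem_block,
      true_iff]
    rcases le_total j i with hji | hij
    · exact (L.index_mono hji).lt_or_eq
    · exact Or.inr ((hL j i).2 (le_antisymm (hi ▸ hb hij) (hi ▸ hb_nonneg j)))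
  have hbefore := sum_nonneg_of_isLowerSet hslack (L.isLowerSet_earlierBlocks i)
  have htotal := sum_slack a b univ
  rw [mul_comm, sub_self, huniv, sum_union (L.disjoint_earlierBlocks_block i)] at htotal
  have hblock : ∑ j ∈ L.block (L.index i), slack a b j =
      (∑ i, b i) * ∑ j ∈ L.block (L.index i), a j := by
    rw [sum_slack, sum_eq_zero fun j hj => ((hL j i).1 (L.mem_block.1 hj)).trans hi, mul_zero,
      sub_zero]
  have hnonpos : ∑ j ∈ L.block (L.index i), a j ≤ 0 :=
    le_of_mul_le_mul_left (by linarith) hB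
  refine le_antisymm ?_ (vSeq_nonneg L ha i)
  rw [vSeq_apply]
  exact div_nonpos_of_nonpos_of_nonneg hnonpos (Nat.cast_nonneg _)

theorem exists_vSeq_face (ha_mono : Antitone a) (ha_nonneg : ∀ i, 0 ≤ a i)
    (ha_pos : 0 < ∑ i, a i) (hb : ∀ k, 0 ≤ coneConstraint a k b) (hb0 : b ≠ 0) :
    ∃ L, (∀ k, 0 ≤ coneConstraint a k (vSeq L a)) ∧ vSeq L a ≠ 0 ∧
      ∀ k, coneConstraint a k b = 0 → coneConstraint a k (vSeq L a) = 0 := by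
  obtain ⟨hb_mono, hb_nonneg, -⟩ := (coneConstraint_nonneg_iff a b).1 hb
  have hslack m : 0 ≤ ∑ j ∈ Iic m, slack a b j := coneConstraint_prefix a m b ▸ hb (.inr m)
  have hB : 0 < ∑ i, b i := by
    obtain ⟨i, hi⟩ := Function.ne_iff.1 hb0
    exact sum_pos' (fun j _ => hb_nonneg j) ⟨i, mem_univ _, (hb_nonneg i).lt_of_ne' hi⟩
  refine ⟨Composition.ofLevelSets b, vSeq_mem_cone _ ha_mono ha_nonneg, fun h => ?_, ?_⟩
  · have := sum_vSeq (Composition.ofLevelSets b) a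
    simp only [h, Pi.zero_apply, sum_const_zero] at this
    exact ha_pos.ne this
  · rintro ((⟨⟨i, j⟩, hij⟩ | i) | n) hk
    · simp only [coneConstraint_pair, sub_eq_zero] at hk ⊢
      exact vSeq_eq_of_index_eq _ _
        ((Composition.index_ofLevelSets_eq_index_iff hb_mono i j).2 hk)
    · exact vSeq_ofLevelSets_eq_zero ha_nonneg hb_mono hb_nonneg hB hslack hk
    · rw [coneConstraint_prefix] at hk ⊢
      rw [sum_slack, sum_vSeq, sum_Iic_vSeq_ofLevelSets ha_mono hb_mono hB hslack hk, sub_self]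

end Cone

theorem cone_generated_by_vSeq_general (d : ℕ) (a : Fin d → ℚ)
    (ha_mono : Antitone a) (ha_nonneg : ∀ i, 0 ≤ a i) (ha_pos : 0 < ∑ i, a i)
    (b : Fin d → ℚ) (hb_mono : Antitone b) (hb_nonneg : ∀ i, 0 ≤ b i) :
    (∀ n : Fin d,
        (∑ i, a i) * (∑ i ∈ Finset.Iic n, b i) ≤ (∑ i, b i) * (∑ i ∈ Finset.Iic n, a i))
      ↔ ∃ τ : Composition d → ℚ, (∀ L, 0 ≤ τ L) ∧
          b = ∑ L : Composition d, τ L • vSeq L a := by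
  constructor
  · intro hcone
    exact exists_nonneg_sum_smul_of_face (coneConstraint a) (fun L => vSeq L a)
      (fun x hx => funext fun i => hx (.inl (.inr i)))
      (fun x hx hx0 => exists_vSeq_face ha_mono ha_nonneg ha_pos hx hx0) b
      ((coneConstraint_nonneg_iff a b).2 ⟨hb_mono, hb_nonneg, hcone⟩)
  · rintro ⟨τ, hτ, rfl⟩
    refine ((coneConstraint_nonneg_iff a _).1 fun k => ?_).2.2
    rw [map_sum]
    exact sum_nonneg fun L _ => by
      rw [map_smul]; exact smul_nonneg (hτ L) (vSeq_mem_cone L ha_mono ha_nonneg k)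

/-- The cone `C(a)` is generated by the finitely many sequences `v(L,a)`, `L` a composition
of `d`: a nonincreasing nonnegative sequence `b` satisfies
`|a|·(b 0 + … + b n) ≤ |b|·(a 0 + … + a n)` for every `n < d` if and only if `b` is a
nonnegative rational combination of the `v(L,a)`. -/
theorem cone_generated_by_vSeq (d : ℕ) (hd : 1 ≤ d) (a : Fin d → ℚ)
    (ha_mono : Antitone a) (ha_nonneg : ∀ i, 0 ≤ a i) (ha_pos : 0 < ∑ i, a i)
    (b : Fin d → ℚ) (hb_mono : Antitone b) (hb_nonneg : ∀ i, 0 ≤ b i) :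
    (∀ n : Fin d,
        (∑ i, a i) * (∑ i ∈ Finset.Iic n, b i) ≤ (∑ i, b i) * (∑ i ∈ Finset.Iic n, a i))
      ↔ ∃ τ : Composition d → ℚ, (∀ L, 0 ≤ τ L) ∧
          b = ∑ L : Composition d, τ L • vSeq L a :=
  cone_generated_by_vSeq_general d a ha_mono ha_nonneg ha_pos b hb_mono hb_nonneg
end

section
/- Let d ≥ 1, let a : Fin d → ℕ be a partition of length d, let μ(d) = lcm(1,2,…,d), and let L be any composition of d. Then every entry of v(L, μ(d)·a) is a nonnegative integer, and v(L, μ(d)·a) is nonincreasing; that is, v(L, μ(d)·a) is a partition of length d. -/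
open Finset

/-- `μ(d) = lcm(1, 2, …, d)`. -/
def lcmUpTo (d : ℕ) : ℕ := (Finset.Icc 1 d).lcm id

lemma sum_block {d : ℕ} (L : Composition d) (f : Fin d → ℚ) (k : Fin L.length) :
    (∑ j : Fin d, if L.index j = k then f j else 0)
      = ∑ p : Fin (L.blocksFun k), f (L.embedding k p) := by
  rw [← L.blocksFinEquiv.sum_comp (fun j => if L.index j = k then f j else 0),
    ← Finset.univ_sigma_univ, Finset.sum_sigma]
  simp only [Composition.blocksFinEquiv, Equiv.coe_fn_mk, Composition.index_embedding]
  rw [Finset.sum_eq_single k]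
  · simp
  · intro b _ hb
    simp [hb]
  · simp

lemma vSeq_eq {d : ℕ} (L : Composition d) (f : Fin d → ℚ) (i : Fin d) :
    vSeq L f i = (∑ p : Fin (L.blocksFun (L.index i)), f (L.embedding (L.index i) p))
        / (L.blocksFun (L.index i) : ℚ) := by
  rw [vSeq, sum_block]

lemma index_monotone {d : ℕ} (L : Composition d) : Monotone L.index := by
  intro i j hij
  by_contra h
  push_neg at h
  have h1 : (j : ℕ) < L.sizeUpTo (L.index j + 1) := L.lt_sizeUpTo_index_succ j
  have h2 : L.sizeUpTo (L.index j + 1) ≤ L.sizeUpTo (L.index i) :=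
    L.monotone_sizeUpTo h
  have h3 : L.sizeUpTo (L.index i) ≤ i := L.sizeUpTo_index_le i
  have : (j : ℕ) < i := lt_of_lt_of_le (lt_of_lt_of_le h1 h2) h3
  exact absurd hij (by omega)

/-- For a partition `a` of length `d ≥ 1` and any composition `L` of `d`, the sequence
`v(L, μ(d)·a)` has nonnegative integer entries and is nonincreasing, i.e. it is a
partition of length `d`. -/
theorem vSeq_lcm_smul_isPartition (d : ℕ) (hd : 1 ≤ d) (a : Fin d → ℕ)
    (ha_mono : Antitone a) (L : Composition d) :
    (∀ i, ∃ n : ℕ, vSeq L (fun j => (lcmUpTo d * a j : ℚ)) i = (n : ℚ)) ∧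
      Antitone (vSeq L (fun j => (lcmUpTo d * a j : ℚ))) := by
  set μ := lcmUpTo d with hμ
  set f : Fin d → ℚ := fun j => (μ * a j : ℚ) with hf
  -- each block length divides μ
  have hdvd : ∀ k : Fin L.length, L.blocksFun k ∣ μ := by
    intro k
    apply Finset.dvd_lcm
    simp only [Finset.mem_Icc]
    exact ⟨L.one_le_blocksFun k, L.blocksFun_le k⟩
  have hbpos : ∀ k : Fin L.length, (0 : ℚ) < (L.blocksFun k : ℚ) := by
    intro k
    exact_mod_cast L.one_le_blocksFun k
  -- the last index of block k
  have hlast : ∀ k : Fin L.length, L.sizeUpTo (k + 1) - 1 < d := by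
    intro k
    have h1 : L.sizeUpTo (k + 1) ≤ d := L.sizeUpTo_le _
    omega
  have hfirst : ∀ k : Fin L.length, L.sizeUpTo k < d := by
    intro k
    have := L.sizeUpTo_strict_mono k.2
    have h1 : L.sizeUpTo (k + 1) ≤ d := L.sizeUpTo_le _
    omega
  -- lower bound: v on block k is at least μ * a (last of block k)
  have hlb : ∀ i : Fin d, (μ : ℚ) * a (⟨L.sizeUpTo (L.index i + 1) - 1, hlast _⟩ : Fin d)
      ≤ vSeq L f i := by
    intro i
    rw [vSeq_eq, le_div_iff₀ (hbpos _)]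
    set k := L.index i
    calc (μ : ℚ) * a (⟨L.sizeUpTo (k + 1) - 1, hlast _⟩ : Fin d) * (L.blocksFun k : ℚ)
        = ∑ _p : Fin (L.blocksFun k), (μ : ℚ) * a (⟨L.sizeUpTo (k + 1) - 1, hlast _⟩ : Fin d) := by
          rw [Finset.sum_const]; simp [mul_comm]
      _ ≤ ∑ p : Fin (L.blocksFun k), f (L.embedding k p) := by
          apply Finset.sum_le_sum
          intro p _
          have h1 : (L.embedding k p : ℕ) ≤ L.sizeUpTo (k + 1) - 1 := by
            have := L.lt_sizeUpTo_index_succ (L.embedding k p)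
            rw [L.index_embedding] at this
            simp only [Fin.val_succ] at this
            omega
          have h2 : a (⟨L.sizeUpTo (k + 1) - 1, hlast _⟩ : Fin d) ≤ a (L.embedding k p) :=
            ha_mono h1
          simp only [hf]
          have : (a (⟨L.sizeUpTo (k + 1) - 1, hlast _⟩ : Fin d) : ℚ) ≤ (a (L.embedding k p) : ℚ) :=
            by exact_mod_cast h2
          have hμnn : (0 : ℚ) ≤ (μ : ℚ) := by positivity
          exact mul_le_mul_of_nonneg_left this hμnn
  -- upper bound: v on block k is at most μ * a (first of block k)
  have hub : ∀ i : Fin d, vSeq L f i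
      ≤ (μ : ℚ) * a (⟨L.sizeUpTo (L.index i), hfirst _⟩ : Fin d) := by
    intro i
    rw [vSeq_eq, div_le_iff₀ (hbpos _)]
    set k := L.index i
    calc (∑ p : Fin (L.blocksFun k), f (L.embedding k p))
        ≤ ∑ _p : Fin (L.blocksFun k), (μ : ℚ) * a (⟨L.sizeUpTo k, hfirst _⟩ : Fin d) := by
          apply Finset.sum_le_sum
          intro p _
          have h1 : L.sizeUpTo k ≤ (L.embedding k p : ℕ) := by
            rw [L.coe_embedding]; omega
          have h2 : a (L.embedding k p) ≤ a (⟨L.sizeUpTo k, hfirst _⟩ : Fin d) := ha_mono h1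
          simp only [hf]
          have : (a (L.embedding k p) : ℚ) ≤ (a (⟨L.sizeUpTo k, hfirst _⟩ : Fin d) : ℚ) :=
            by exact_mod_cast h2
          have hμnn : (0 : ℚ) ≤ (μ : ℚ) := by positivity
          exact mul_le_mul_of_nonneg_left this hμnn
      _ = (μ : ℚ) * a (⟨L.sizeUpTo k, hfirst _⟩ : Fin d) * (L.blocksFun k : ℚ) := by
          rw [Finset.sum_const]; simp [mul_comm]
  constructor
  · -- integrality
    intro i
    refine ⟨(μ / L.blocksFun (L.index i)) *
      ∑ p : Fin (L.blocksFun (L.index i)), a (L.embedding (L.index i) p), ?_⟩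
    have hcancel : ((μ / L.blocksFun (L.index i) : ℕ) : ℚ) * (L.blocksFun (L.index i) : ℚ)
        = (μ : ℚ) := by
      rw [← Nat.cast_mul, Nat.div_mul_cancel (hdvd (L.index i))]
    rw [vSeq_eq]
    simp only [hf]
    rw [div_eq_iff (ne_of_gt (hbpos (L.index i))), ← Finset.mul_sum]
    push_cast
    rw [mul_right_comm, hcancel]
  · -- antitone
    intro i i' h
    rcases eq_or_lt_of_le (index_monotone L h) with heq | hlt
    · rw [vSeq, vSeq, ← heq]
    · calc vSeq L f i' ≤ (μ : ℚ) * a (⟨L.sizeUpTo (L.index i'), hfirst _⟩ : Fin d) := hub i'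
        _ ≤ (μ : ℚ) * a (⟨L.sizeUpTo (L.index i + 1) - 1, hlast _⟩ : Fin d) := by
            have hle : L.sizeUpTo (L.index i + 1) - 1 ≤ L.sizeUpTo (L.index i') := by
              have h2 : L.sizeUpTo (L.index i + 1) ≤ L.sizeUpTo (L.index i') :=
                L.monotone_sizeUpTo hlt
              omega
            have h3 : a (⟨L.sizeUpTo (L.index i'), hfirst _⟩ : Fin d)
                ≤ a (⟨L.sizeUpTo (L.index i + 1) - 1, hlast _⟩ : Fin d) := ha_mono hle
            have hμnn : (0 : ℚ) ≤ (μ : ℚ) := by positivity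
            exact mul_le_mul_of_nonneg_left (by exact_mod_cast h3) hμnn
        _ ≤ vSeq L f i := hlb i
end

section
/- Let d ≥ 2, let a : Fin d → ℚ be a nonincreasing nonnegative sequence, and let 1 ≤ n < d. Write a' for the prefix (a 0,…,a (n-1)) and a'' for the suffix (a n,…,a (d-1)). Let c : Fin n → ℚ and e : Fin (d-n) → ℚ be nonincreasing nonnegative sequences with Σ c = a 0 + … + a (n-1) and Σ e = a n + … + a (d-1), such that c is dominated by a' and e is dominated by a''. Then the concatenation b = c ∨ e (b i = c i for i < n and b (n+j) = e j) is a nonincreasing nonnegative sequence of the same weight as a, it is dominated by a, and it satisfies b 0 + … + b (n-1) = a 0 + … + a (n-1). Conversely, if b is a nonincreasing nonnegative sequence of the same weight as a, dominated by a, with b 0 + … + b (n-1) = a 0 + … + a (n-1), then its prefix (b 0,…,b (n-1)) is dominated by a' with equal weight and its suffix (b n,…,b (d-1)) is dominated by a'' with equal weight. -/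
open Finset

private def extQ {d : ℕ} (f : Fin d → ℚ) : ℕ → ℚ :=
  fun k => if h : k < d then f ⟨k, h⟩ else 0

private lemma extQ_eq {d : ℕ} (f : Fin d → ℚ) {k : ℕ} (h : k < d) :
    extQ f k = f ⟨k, h⟩ := dif_pos h

private lemma sum_univ_extQ {d : ℕ} (f : Fin d → ℚ) :
    ∑ i, f i = ∑ k ∈ Finset.range d, extQ f k := by
  rw [← Fin.sum_univ_eq_sum_range (extQ f) d]
  exact Finset.sum_congr rfl fun i _ => (extQ_eq f i.isLt).symm

private lemma sum_Iic_extQ {d : ℕ} (f : Fin d → ℚ) (m : Fin d) :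
    ∑ i ∈ Finset.Iic m, f i = ∑ k ∈ Finset.range (m.val + 1), extQ f k := by
  refine Finset.sum_nbij' (fun i => i.val)
    (fun k => if h : k < d then ⟨k, h⟩ else m) ?_ ?_ ?_ ?_ ?_
  · intro i hi; simp only [Finset.mem_Iic] at hi
    simp only [Finset.mem_range]; omega
  · intro k hk; simp only [Finset.mem_range] at hk
    have hkd : k < d := by omega
    simp only [dif_pos hkd, Finset.mem_Iic]
    exact Fin.mk_le_mk.mpr (by omega)
  · intro i _; simp only [dif_pos i.isLt]
  · intro k hk; simp only [Finset.mem_range] at hk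
    have hkd : k < d := by omega
    simp [dif_pos hkd]
  · intro i _; exact (extQ_eq f i.isLt).symm

/-- Splitting the dominance order at an index `n` where the partial sums agree.
Let `a` be a nonincreasing nonnegative sequence of length `d ≥ 2`, `1 ≤ n < d`, with
prefix `a' = (a 0, …, a (n-1))` and suffix `a'' = (a n, …, a (d-1))`.

Forward direction: if `c` (length `n`) and `e` (length `d-n`) are nonincreasing nonnegative
sequences with `∑ c = a 0 + … + a (n-1)` and `∑ e = a n + … + a (d-1)`, `c` dominated by `a'`
and `e` dominated by `a''`, then the concatenation `b = c ∨ e` is a nonincreasing nonnegative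
sequence with the same weight as `a`, dominated by `a`, whose first `n` partial sums agree
with those of `a` at index `n-1`.

Converse: if `b` is nonincreasing, nonnegative, of the same weight as `a`, dominated by `a`,
with `b 0 + … + b (n-1) = a 0 + … + a (n-1)`, then its prefix is dominated by `a'` with equal
weight and its suffix is dominated by `a''` with equal weight. -/
theorem dominance_split_at_equality (d n : ℕ) (hd : 2 ≤ d) (hn1 : 1 ≤ n) (hnd : n < d)
    (a : Fin d → ℚ) (ha_mono : Antitone a) (ha_nonneg : ∀ i, 0 ≤ a i) :
    ((∀ (c : Fin n → ℚ) (e : Fin (d - n) → ℚ),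
        Antitone c → (∀ i, 0 ≤ c i) → Antitone e → (∀ j, 0 ≤ e j) →
        (∑ i, c i) = (∑ i : Fin n, a ⟨i.val, by omega⟩) →
        (∑ j, e j) = (∑ j : Fin (d - n), a ⟨n + j.val, by omega⟩) →
        (∀ m : Fin n,
          (∑ i ∈ Finset.Iic m, c i) ≤ ∑ i ∈ Finset.Iic m, a ⟨i.val, by omega⟩) →
        (∀ m : Fin (d - n),
          (∑ j ∈ Finset.Iic m, e j) ≤ ∑ j ∈ Finset.Iic m, a ⟨n + j.val, by omega⟩) →
        ∀ b : Fin d → ℚ,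
          (∀ i : Fin d, ∀ h : i.val < n, b i = c ⟨i.val, h⟩) →
          (∀ j : Fin (d - n), b ⟨n + j.val, by omega⟩ = e j) →
          (Antitone b ∧ (∀ i, 0 ≤ b i) ∧ (∑ i, b i) = (∑ i, a i) ∧
            (∀ m : Fin d, (∑ i ∈ Finset.Iic m, b i) ≤ (∑ i ∈ Finset.Iic m, a i)) ∧
            (∑ i : Fin n, b ⟨i.val, by omega⟩) = (∑ i : Fin n, a ⟨i.val, by omega⟩)))
      ∧
      (∀ b : Fin d → ℚ, Antitone b → (∀ i, 0 ≤ b i) →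
        (∑ i, b i) = (∑ i, a i) →
        (∀ m : Fin d, (∑ i ∈ Finset.Iic m, b i) ≤ (∑ i ∈ Finset.Iic m, a i)) →
        (∑ i : Fin n, b ⟨i.val, by omega⟩) = (∑ i : Fin n, a ⟨i.val, by omega⟩) →
        (((∑ i : Fin n, b ⟨i.val, by omega⟩) = (∑ i : Fin n, a ⟨i.val, by omega⟩) ∧
            ∀ m : Fin n, (∑ i ∈ Finset.Iic m, b ⟨i.val, by omega⟩) ≤
              ∑ i ∈ Finset.Iic m, a ⟨i.val, by omega⟩) ∧
          ((∑ j : Fin (d - n), b ⟨n + j.val, by omega⟩) =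
              (∑ j : Fin (d - n), a ⟨n + j.val, by omega⟩) ∧
            ∀ m : Fin (d - n), (∑ j ∈ Finset.Iic m, b ⟨n + j.val, by omega⟩) ≤
              ∑ j ∈ Finset.Iic m, a ⟨n + j.val, by omega⟩)))) := by
  -- translation lemmas
  have key1 : ∀ f : Fin d → ℚ,
      (∑ i : Fin n, f ⟨i.val, by omega⟩) = ∑ k ∈ Finset.range n, extQ f k := by
    intro f
    rw [sum_univ_extQ]
    refine Finset.sum_congr rfl fun k hk => ?_
    simp only [Finset.mem_range] at hk
    rw [extQ_eq _ hk, extQ_eq f (show k < d by omega)]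
  have key2 : ∀ f : Fin d → ℚ,
      (∑ j : Fin (d - n), f ⟨n + j.val, by omega⟩)
        = ∑ k ∈ Finset.range (d - n), extQ f (n + k) := by
    intro f
    rw [sum_univ_extQ]
    refine Finset.sum_congr rfl fun k hk => ?_
    simp only [Finset.mem_range] at hk
    rw [extQ_eq _ hk, extQ_eq f (show n + k < d by omega)]
  have key3 : ∀ (f : Fin d → ℚ) (m : Fin n),
      (∑ i ∈ Finset.Iic m, f ⟨i.val, by omega⟩)
        = ∑ k ∈ Finset.range (m.val + 1), extQ f k := by
    intro f m
    rw [sum_Iic_extQ]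
    refine Finset.sum_congr rfl fun k hk => ?_
    simp only [Finset.mem_range] at hk
    have hkn : k < n := by omega
    rw [extQ_eq _ hkn, extQ_eq f (show k < d by omega)]
  have key4 : ∀ (f : Fin d → ℚ) (m : Fin (d - n)),
      (∑ j ∈ Finset.Iic m, f ⟨n + j.val, by omega⟩)
        = ∑ k ∈ Finset.range (m.val + 1), extQ f (n + k) := by
    intro f m
    rw [sum_Iic_extQ]
    refine Finset.sum_congr rfl fun k hk => ?_
    simp only [Finset.mem_range] at hk
    have hkn : k < d - n := by omega
    rw [extQ_eq _ hkn, extQ_eq f (show n + k < d by omega)]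
  have split : ∀ g : ℕ → ℚ, ∑ k ∈ Finset.range d, g k
      = ∑ k ∈ Finset.range n, g k + ∑ k ∈ Finset.range (d - n), g (n + k) := by
    intro g
    conv_lhs => rw [show d = n + (d - n) from by omega]
    rw [Finset.sum_range_add]
  constructor
  · -- forward direction
    intro c e hc_mono hc_nn he_mono he_nn hc_sum he_sum hc_dom he_dom b hb1 hb2
    have hBC : ∀ k : ℕ, k < n → extQ b k = extQ c k := by
      intro k hk
      rw [extQ_eq b (show k < d by omega), extQ_eq c hk]
      exact hb1 ⟨k, by omega⟩ hk
    have hBE : ∀ k : ℕ, k < d - n → extQ b (n + k) = extQ e k := by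
      intro k hk
      rw [extQ_eq b (show n + k < d by omega), extQ_eq e hk]
      exact hb2 ⟨k, hk⟩
    have hc_sum' : ∑ k ∈ Finset.range n, extQ c k = ∑ k ∈ Finset.range n, extQ a k :=
      (sum_univ_extQ c).symm.trans (hc_sum.trans (key1 a))
    have he_sum' : ∑ k ∈ Finset.range (d - n), extQ e k
        = ∑ k ∈ Finset.range (d - n), extQ a (n + k) :=
      (sum_univ_extQ e).symm.trans (he_sum.trans (key2 a))
    have hc_dom' : ∀ m : ℕ, m < n →
        ∑ k ∈ Finset.range (m + 1), extQ c k ≤ ∑ k ∈ Finset.range (m + 1), extQ a k := by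
      intro m hm
      exact ((sum_Iic_extQ c ⟨m, hm⟩).symm.trans_le (hc_dom ⟨m, hm⟩)).trans_eq
        (key3 a ⟨m, hm⟩)
    have he_dom' : ∀ m : ℕ, m < d - n →
        ∑ k ∈ Finset.range (m + 1), extQ e k
          ≤ ∑ k ∈ Finset.range (m + 1), extQ a (n + k) := by
      intro m hm
      exact ((sum_Iic_extQ e ⟨m, hm⟩).symm.trans_le (he_dom ⟨m, hm⟩)).trans_eq
        (key4 a ⟨m, hm⟩)
    -- antitone helpers on extQ
    have hcE : ∀ k l : ℕ, k ≤ l → l < n → extQ c l ≤ extQ c k := by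
      intro k l hkl hl
      rw [extQ_eq c hl, extQ_eq c (show k < n by omega)]
      exact hc_mono (Fin.mk_le_mk.mpr hkl)
    have heE : ∀ k l : ℕ, k ≤ l → l < d - n → extQ e l ≤ extQ e k := by
      intro k l hkl hl
      rw [extQ_eq e hl, extQ_eq e (show k < d - n by omega)]
      exact he_mono (Fin.mk_le_mk.mpr hkl)
    have haE : ∀ k l : ℕ, k ≤ l → l < d → extQ a l ≤ extQ a k := by
      intro k l hkl hl
      rw [extQ_eq a hl, extQ_eq a (show k < d by omega)]
      exact ha_mono (Fin.mk_le_mk.mpr hkl)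
    have h_e0 : extQ e 0 ≤ extQ a n := by
      have := he_dom' 0 (by omega)
      simpa using this
    have h_c_last : extQ a (n - 1) ≤ extQ c (n - 1) := by
      have hlt : ∑ k ∈ Finset.range (n - 1), extQ c k
          ≤ ∑ k ∈ Finset.range (n - 1), extQ a k := by
        rcases Nat.lt_or_ge 1 n with h | h
        · have := hc_dom' (n - 2) (by omega)
          have h21 : n - 2 + 1 = n - 1 := by omega
          rwa [h21] at this
        · have hn : n = 1 := by omega
          simp [hn]
      have esplit : ∀ g : ℕ → ℚ, ∑ k ∈ Finset.range n, g k
          = ∑ k ∈ Finset.range (n - 1), g k + g (n - 1) := by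
        intro g
        conv_lhs => rw [show n = (n - 1) + 1 from by omega]
        rw [Finset.sum_range_succ]
      have e1 := esplit (extQ c)
      have e2 := esplit (extQ a)
      have := hc_sum'
      rw [e1, e2] at this
      linarith
    refine ⟨?_, ?_, ?_, ?_, ?_⟩
    · -- Antitone b
      intro i j hij
      have hij' : i.val ≤ j.val := hij
      have hiE : b i = extQ b i.val := (extQ_eq b i.isLt).symm
      have hjE : b j = extQ b j.val := (extQ_eq b j.isLt).symm
      rw [hiE, hjE]
      rcases Nat.lt_or_ge j.val n with hj | hj
      · -- both in prefix
        rw [hBC j.val hj, hBC i.val (by omega)]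
        exact hcE i.val j.val hij' hj
      · rcases Nat.lt_or_ge i.val n with hi | hi
        · -- cross case
          calc extQ b j.val = extQ e (j.val - n) := by
                have h := hBE (j.val - n) (by omega)
                rwa [show n + (j.val - n) = j.val from by omega] at h
            _ ≤ extQ e 0 := heE 0 (j.val - n) (by omega) (by omega)
            _ ≤ extQ a n := h_e0
            _ ≤ extQ a (n - 1) := haE (n - 1) n (by omega) (by omega)
            _ ≤ extQ c (n - 1) := h_c_last
            _ ≤ extQ c i.val := hcE i.val (n - 1) (by omega) (by omega)
            _ = extQ b i.val := (hBC i.val hi).symm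
        · -- both in suffix
          calc extQ b j.val = extQ e (j.val - n) := by
                have h := hBE (j.val - n) (by omega)
                rwa [show n + (j.val - n) = j.val from by omega] at h
            _ ≤ extQ e (i.val - n) := heE (i.val - n) (j.val - n) (by omega) (by omega)
            _ = extQ b i.val := by
                have h := hBE (i.val - n) (by omega)
                rw [show n + (i.val - n) = i.val from by omega] at h
                exact h.symm
    · -- nonneg
      intro i
      rcases Nat.lt_or_ge i.val n with hi | hi
      · rw [hb1 i hi]; exact hc_nn _
      · have h2 := hb2 ⟨i.val - n, by omega⟩
        have heq : (⟨n + ((⟨i.val - n, by omega⟩ : Fin (d - n))).val, by omega⟩ : Fin d) = i :=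
          Fin.ext (by simp; omega)
        rw [heq] at h2
        rw [h2]; exact he_nn _
    · -- total sums equal
      calc (∑ i, b i) = ∑ k ∈ Finset.range d, extQ b k := sum_univ_extQ b
        _ = ∑ k ∈ Finset.range n, extQ b k
            + ∑ k ∈ Finset.range (d - n), extQ b (n + k) := split _
        _ = ∑ k ∈ Finset.range n, extQ c k
            + ∑ k ∈ Finset.range (d - n), extQ e k := by
            refine congrArg₂ (· + ·) ?_ ?_
            · exact Finset.sum_congr rfl fun k hk =>
                hBC k (Finset.mem_range.mp hk)
            · exact Finset.sum_congr rfl fun k hk =>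
                hBE k (Finset.mem_range.mp hk)
        _ = ∑ k ∈ Finset.range n, extQ a k
            + ∑ k ∈ Finset.range (d - n), extQ a (n + k) := by
            rw [hc_sum', he_sum']
        _ = ∑ k ∈ Finset.range d, extQ a k := (split _).symm
        _ = ∑ i, a i := (sum_univ_extQ a).symm
    · -- dominance
      intro m
      rw [sum_Iic_extQ b m, sum_Iic_extQ a m]
      rcases Nat.lt_or_ge m.val n with hm | hm
      · calc ∑ k ∈ Finset.range (m.val + 1), extQ b k
            = ∑ k ∈ Finset.range (m.val + 1), extQ c k :=
              Finset.sum_congr rfl fun k hk =>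
                hBC k (by have := Finset.mem_range.mp hk; omega)
          _ ≤ ∑ k ∈ Finset.range (m.val + 1), extQ a k := hc_dom' m.val hm
      · have hsplit : ∀ g : ℕ → ℚ, ∑ k ∈ Finset.range (m.val + 1), g k
            = ∑ k ∈ Finset.range n, g k
              + ∑ k ∈ Finset.range (m.val + 1 - n), g (n + k) := by
          intro g
          conv_lhs => rw [show m.val + 1 = n + (m.val + 1 - n) from by omega]
          rw [Finset.sum_range_add]
        have hmd : m.val < d := m.isLt
        have he_part : ∑ k ∈ Finset.range (m.val + 1 - n), extQ e k
            ≤ ∑ k ∈ Finset.range (m.val + 1 - n), extQ a (n + k) := by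
          have := he_dom' (m.val - n) (by omega)
          have h1 : m.val - n + 1 = m.val + 1 - n := by omega
          rwa [h1] at this
        calc ∑ k ∈ Finset.range (m.val + 1), extQ b k
            = ∑ k ∈ Finset.range n, extQ b k
              + ∑ k ∈ Finset.range (m.val + 1 - n), extQ b (n + k) := hsplit _
          _ = ∑ k ∈ Finset.range n, extQ c k
              + ∑ k ∈ Finset.range (m.val + 1 - n), extQ e k := by
              refine congrArg₂ (· + ·) ?_ ?_
              · exact Finset.sum_congr rfl fun k hk =>
                  hBC k (Finset.mem_range.mp hk)
              · exact Finset.sum_congr rfl fun k hk =>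
                  hBE k (by have := Finset.mem_range.mp hk; omega)
          _ ≤ ∑ k ∈ Finset.range n, extQ a k
              + ∑ k ∈ Finset.range (m.val + 1 - n), extQ a (n + k) :=
              add_le_add hc_sum'.le he_part
          _ = ∑ k ∈ Finset.range (m.val + 1), extQ a k := (hsplit _).symm
    · -- prefix sums equal
      exact (key1 b).trans
        ((Finset.sum_congr rfl fun k hk => hBC k (Finset.mem_range.mp hk)).trans
          (hc_sum'.trans (key1 a).symm))
  · -- converse direction
    intro b hb_mono hb_nn hb_sum hb_dom hb_pre
    have hb_pre' : ∑ k ∈ Finset.range n, extQ b k = ∑ k ∈ Finset.range n, extQ a k :=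
      (key1 b).symm.trans (hb_pre.trans (key1 a))
    have hb_sum' : ∑ k ∈ Finset.range d, extQ b k = ∑ k ∈ Finset.range d, extQ a k :=
      (sum_univ_extQ b).symm.trans (hb_sum.trans (sum_univ_extQ a))
    have hb_dom' : ∀ m : ℕ, (h : m < d) →
        ∑ k ∈ Finset.range (m + 1), extQ b k ≤ ∑ k ∈ Finset.range (m + 1), extQ a k := by
      intro m h
      exact ((sum_Iic_extQ b ⟨m, h⟩).symm.trans_le (hb_dom ⟨m, h⟩)).trans_eq
        (sum_Iic_extQ a ⟨m, h⟩)
    refine ⟨⟨hb_pre, ?_⟩, ?_, ?_⟩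
    · intro m
      exact ((key3 b m).trans_le (hb_dom' m.val (by omega))).trans_eq (key3 a m).symm
    · refine (key2 b).trans (Eq.trans ?_ (key2 a).symm)
      have h1 := split (extQ b)
      have h2 := split (extQ a)
      linarith
    · intro m
      refine ((key4 b m).trans_le ?_).trans_eq (key4 a m).symm
      have hs : ∀ g : ℕ → ℚ, ∑ k ∈ Finset.range (n + m.val + 1), g k
          = ∑ k ∈ Finset.range n, g k + ∑ k ∈ Finset.range (m.val + 1), g (n + k) := by
        intro g
        conv_lhs => rw [show n + m.val + 1 = n + (m.val + 1) from by omega]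
        rw [Finset.sum_range_add]
      have hd1 := hb_dom' (n + m.val) (by omega)
      have h1 := hs (extQ b)
      have h2 := hs (extQ a)
      linarith
end
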